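/- In an alternating base tree T, for any vertex t ≠ f and any shortest γ̄(t)-alternating path P from f to the parent p(t) of t, P does not contain t. -/

import Mathlib

/-!
If `t` lay on `P`, the prefix of `P` ending at `t` would be an alternating path to `t` strictly
shorter than `P` (it misses at least the last edge, since `p(t) ≠ t`). But the tree condition
gives `dist^{γ(t)}(t) = |P| + 1`, while `γ(t)` is the parity of a shortest alternating path to
`t`, so every alternating path to `t` has length at least `|P| + 1`.
-/

open Classical

namespace AltMatch

variable {V : Type*}

/-- `M` is a matching of `G`: a set of edges of `G` that pairwise share no vertex. -/
def IsMatching (G : SimpleGraph V) (M : Set (Sym2 V)) : Prop :=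
  M ⊆ G.edgeSet ∧ ∀ e₁ ∈ M, ∀ e₂ ∈ M, e₁ ≠ e₂ → ∀ v : V, v ∈ e₁ → v ∉ e₂

/-- `v` is unmatched by `M`. -/
def Unmatched (M : Set (Sym2 V)) (v : V) : Prop := ∀ e ∈ M, v ∉ e

/-- A walk is alternating (starting with a non-matching edge):
its `i`-th edge is in `M` iff `i` is odd. -/
def Alt {G : SimpleGraph V} {u v : V} (M : Set (Sym2 V)) (w : G.Walk u v) : Prop :=
  ∀ (i : ℕ) (h : i < w.edges.length), (w.edges.get ⟨i, h⟩ ∈ M ↔ i % 2 = 1)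

/-- An alternating path (w.r.t. `M`) from `u` to `v`. -/
def IsAltPath (G : SimpleGraph V) (M : Set (Sym2 V)) {u v : V} (w : G.Walk u v) : Prop :=
  w.IsPath ∧ Alt M w

/-- Parity of a natural number as a `Bool` (`true` = odd). -/
def parityOf (n : ℕ) : Bool := decide (n % 2 = 1)

/-- `altDist G M θ f v` : minimum length of an alternating path from `f` to `v`
of parity `θ` (`true` = odd), or `⊤` if none exists. -/
noncomputable def altDist (G : SimpleGraph V) (M : Set (Sym2 V)) (θ : Bool) (f v : V) : ℕ∞ :=
  sInf {n : ℕ∞ | ∃ w : G.Walk f v, IsAltPath G M w ∧ parityOf w.length = θ ∧ (w.length : ℕ∞) = n}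

/-- `gam G M f v` : the parity of the shortest alternating path from `f` to `v`
(`true` = odd). -/
noncomputable def gam (G : SimpleGraph V) (M : Set (Sym2 V)) (f v : V) : Bool :=
  if altDist G M true f v < altDist G M false f v then true else false

/-- `w` is a shortest `θ`-alternating path from `f` to `v`. -/
def IsShortestAlt (G : SimpleGraph V) (M : Set (Sym2 V)) (θ : Bool) (f v : V)
    (w : G.Walk f v) : Prop :=
  IsAltPath G M w ∧ parityOf w.length = θ ∧ (w.length : ℕ∞) = altDist G M θ f v

/-- An `M`-augmenting path: an alternating path of odd length between two distinct
unmatched vertices. -/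
def IsAugPath (G : SimpleGraph V) (M : Set (Sym2 V)) {a b : V} (w : G.Walk a b) : Prop :=
  a ≠ b ∧ Unmatched M a ∧ Unmatched M b ∧ IsAltPath G M w ∧ w.length % 2 = 1

/-- `μ(G)` : the maximum size of a matching of `G`. -/
noncomputable def matchingNumber (G : SimpleGraph V) : ℕ :=
  sSup {n : ℕ | ∃ M : Set (Sym2 V), IsMatching G M ∧ M.Finite ∧ M.ncard = n}

/-- An alternating base tree for `G`, `M`, `f`: a spanning tree of `G` rooted at `f`
(encoded by its parent function) such that for every `v ≠ f` with parent `u`,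
`dist^{γ(v)}(v) = dist^{γ̄(v)}(u) + 1`. -/
structure AltBaseTree (G : SimpleGraph V) (M : Set (Sym2 V)) (f : V) where
  parent : V → V
  parent_root : parent f = f
  parent_adj : ∀ v, v ≠ f → G.Adj (parent v) v
  parent_reaches : ∀ v, ∃ n : ℕ, parent^[n] v = f
  dist_eq : ∀ v, v ≠ f →
    altDist G M (gam G M f v) f v = altDist G M (!gam G M f v) f (parent v) + 1

namespace AltBaseTree

variable {G : SimpleGraph V} {M : Set (Sym2 V)} {f : V}

/-- `v` belongs to the subtree `T_t` of `T` rooted at `t` (`t` is an ancestor-or-self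
of `v`). -/
def InSubtree (T : AltBaseTree G M f) (t v : V) : Prop := ∃ n : ℕ, T.parent^[n] v = t

/-- `e` is an edge of the tree `T`. -/
def IsTreeEdge (T : AltBaseTree G M f) (e : Sym2 V) : Prop :=
  ∃ v, v ≠ f ∧ e = s(T.parent v, v)

/-- `e` is an outgoing edge of the subtree `T_t`: a non-tree edge of `G` with exactly
one endpoint inside `T_t`. -/
def IsOutgoing (T : AltBaseTree G M f) (t : V) (e : Sym2 V) : Prop :=
  e ∈ G.edgeSet ∧ ¬ T.IsTreeEdge e ∧
    ∃ x y : V, e = s(x, y) ∧ ¬ T.InSubtree t x ∧ T.InSubtree t y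

end AltBaseTree

/-- Matching-parity of an edge: `true` (odd) iff `e ∈ M`. -/
noncomputable def rho (M : Set (Sym2 V)) (e : Sym2 V) : Bool :=
  if e ∈ M then true else false

/-- Sum-level of an edge `e = {x,y}` : `dist^{ρ(e)}(x) + dist^{ρ(e)}(y)`. -/
noncomputable def levelSum (G : SimpleGraph V) (M : Set (Sym2 V)) (f : V) (e : Sym2 V) : ℕ∞ :=
  Sym2.lift ⟨fun x y => altDist G M (rho M e) f x + altDist G M (rho M e) f y,
    fun x y => add_comm _ _⟩ e

/-- Max-level of an edge `e = {x,y}` : `max (dist^{ρ(e)}(x)) (dist^{ρ(e)}(y))`. -/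
noncomputable def levelMax (G : SimpleGraph V) (M : Set (Sym2 V)) (f : V) (e : Sym2 V) : ℕ∞ :=
  Sym2.lift ⟨fun x y => max (altDist G M (rho M e) f x) (altDist G M (rho M e) f y),
    fun x y => max_comm _ _⟩ e

/-- The level of an edge: `(0,0)` for tree edges, and the lexicographic pair
`(sum-level, max-level)` otherwise. -/
noncomputable def level {G : SimpleGraph V} {M : Set (Sym2 V)} {f : V}
    (T : AltBaseTree G M f) (e : Sym2 V) : Lex (ℕ∞ × ℕ∞) :=
  if T.IsTreeEdge e then toLex ((0 : ℕ∞), (0 : ℕ∞))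
  else toLex (levelSum G M f e, levelMax G M f e)

/-- The level of a walk: the maximum level of its edges. -/
noncomputable def walkLevel {G : SimpleGraph V} {M : Set (Sym2 V)} {f : V}
    (T : AltBaseTree G M f) {a b : V} (w : G.Walk a b) : Lex (ℕ∞ × ℕ∞) :=
  (w.edges.map (level T)).foldr max (toLex ((0 : ℕ∞), (0 : ℕ∞)))

/-- `out` assigns to each vertex `v` (whose subtree has an outgoing edge) a
minimum-level outgoing edge of `T_v`. -/
def IsMOE {G : SimpleGraph V} {M : Set (Sym2 V)} {f : V}
    (T : AltBaseTree G M f) (out : V → Sym2 V) : Prop :=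
  ∀ v, (∃ e, T.IsOutgoing v e) →
    T.IsOutgoing v (out v) ∧ ∀ e, T.IsOutgoing v e → level T (out v) ≤ level T e

/-- Canonical tie-breaking rule for MOEs: if a minimum-level outgoing edge of `T_v`
incident to `v` exists, then `out v` is incident to `v`. -/
def CanonicalTie {G : SimpleGraph V} {M : Set (Sym2 V)} {f : V}
    (T : AltBaseTree G M f) (out : V → Sym2 V) : Prop :=
  ∀ v e, T.IsOutgoing v e → (∀ e', T.IsOutgoing v e' → level T e ≤ level T e') →
    v ∈ e → v ∈ out v

/-- Level of `out v`, with the virtual value `(∞,∞)` when `T_v` has no outgoing edge. -/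
noncomputable def outLevel {G : SimpleGraph V} {M : Set (Sym2 V)} {f : V}
    (T : AltBaseTree G M f) (out : V → Sym2 V) (v : V) : Lex (ℕ∞ × ℕ∞) :=
  if ∃ e, T.IsOutgoing v e then level T (out v) else toLex ((⊤ : ℕ∞), (⊤ : ℕ∞))

/-- `P` is a `θ`-extension of the pair `(s,t)`: a shortest `θ`-alternating path from
`f` to `t` passing through `s` with `level(P) < level(out(s))`. -/
def IsExtension {G : SimpleGraph V} {M : Set (Sym2 V)} {f : V}
    (T : AltBaseTree G M f) (out : V → Sym2 V) (θ : Bool) (s : V) {t : V}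
    (P : G.Walk f t) : Prop :=
  IsShortestAlt G M θ f t P ∧ s ∈ P.support ∧ walkLevel T P < outLevel T out s

/-- `Q` is a `θ`-extendable path from `s` to `t`: the suffix `P[s,t]` of some
`θ`-extension `P` of `(s,t)`. -/
def IsExtendablePath [DecidableEq V] {G : SimpleGraph V} {M : Set (Sym2 V)} {f : V}
    (T : AltBaseTree G M f) (out : V → Sym2 V) (θ : Bool) {s t : V}
    (Q : G.Walk s t) : Prop :=
  ∃ (P : G.Walk f t) (hs : s ∈ P.support), IsExtension T out θ s P ∧ P.dropUntil s hs = Q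

end AltMatch

namespace AltMatch

variable {V : Type*} {G : SimpleGraph V} {M : Set (Sym2 V)}

theorem altDist_gam_le (θ : Bool) (f t : V) :
    altDist G M (gam G M f t) f t ≤ altDist G M θ f t := by
  unfold gam
  split_ifs with h <;> cases θ
  exacts [h.le, le_rfl, le_rfl, not_lt.mp h]

theorem Alt.of_append_left {u v w : V} {p : G.Walk u v} {q : G.Walk v w}
    (h : Alt M (p.append q)) : Alt M p := by
  intro i hi
  have hi' : i < (p.append q).edges.length := by
    rw [SimpleGraph.Walk.edges_append, List.length_append]; omega
  simpa only [List.get_eq_getElem, SimpleGraph.Walk.edges_append,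
    List.getElem_append_left hi] using h i hi'

theorem IsAltPath.takeUntil [DecidableEq V] {u v t : V} {w : G.Walk u v}
    (hw : IsAltPath G M w) (ht : t ∈ w.support) : IsAltPath G M (w.takeUntil t ht) :=
  ⟨hw.1.takeUntil ht, Alt.of_append_left ((w.take_spec ht).symm ▸ hw.2)⟩

theorem altDist_gam_le_length {f t : V} {w : G.Walk f t} (hw : IsAltPath G M w) :
    altDist G M (gam G M f t) f t ≤ w.length :=
  (altDist_gam_le _ f t).trans (sInf_le ⟨w, hw, rfl, rfl⟩)

end AltMatch

open AltMatch

theorem shortest_opp_path_to_parent_avoids_general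
    {V : Type*} (G : SimpleGraph V) (M : Set (Sym2 V))
    (f : V)
    (T : AltBaseTree G M f) (t : V) (ht : t ≠ f) (P : G.Walk f (T.parent t))
    (hP : IsShortestAlt G M (!gam G M f t) f (T.parent t) P) :
    t ∉ P.support := by
  intro htP
  have hprefix := altDist_gam_le_length (hP.1.takeUntil htP)
  have hshorter : (P.takeUntil t htP).length < P.length :=
    P.length_takeUntil_lt_length htP (T.parent_adj t ht).ne'
  rw [T.dist_eq t ht, ← hP.2.2] at hprefix
  norm_cast at hprefix
  omega

/-- For `t ≠ f`, any shortest `γ̄(t)`-alternating path from `f` to the parent of `t`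
does not contain `t`. -/
theorem shortest_opp_path_to_parent_avoids
    {V : Type*} [Fintype V] [DecidableEq V] (G : SimpleGraph V) (M : Set (Sym2 V))
    (f : V) (hM : IsMatching G M) (hf : Unmatched M f)
    (hreach : ∀ v : V, altDist G M true f v ≠ ⊤ ∨ altDist G M false f v ≠ ⊤)
    (T : AltBaseTree G M f) (t : V) (ht : t ≠ f) (P : G.Walk f (T.parent t))
    (hP : IsShortestAlt G M (!gam G M f t) f (T.parent t) P) :
    t ∉ P.support :=
  shortest_opp_path_to_parent_avoids_general G M f T t ht P hP
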